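/- arXiv:1011.1058 — 4 statements merged into one kernel-verified Lean document; each statement's English description precedes it below -/
import Mathlib

section
/- Let G be a simple undirected graph with girth g = 2r+1 and let v be any vertex. Then the number of vertices of G is at least n_0(v) + n_1(v) + ... + n_r(v), where n_i(v) is the number of non-returning walks of length i starting at v. -/
variable {V : Type*}

/-- `w : Fin (i+1) → V` is a non-returning walk of `i` edges in `G`:
consecutive vertices are adjacent and there is no immediate backtracking. -/
def IsNR (G : SimpleGraph V) (i : ℕ) (w : Fin (i + 1) → V) : Prop :=
  (∀ j : ℕ, ∀ _h : j < i, G.Adj (w ⟨j, by omega⟩) (w ⟨j + 1, by omega⟩)) ∧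
  (∀ j : ℕ, ∀ _h : j + 2 ≤ i, w ⟨j, by omega⟩ ≠ w ⟨j + 2, by omega⟩)

/-- `nV G i v` : the number of non-returning walks of `i` edges starting at `v`. -/
noncomputable def nV (G : SimpleGraph V) (i : ℕ) (v : V) : ℕ :=
  Nat.card {w : Fin (i + 1) → V // IsNR G i w ∧ w 0 = v}

/-- `nE G i u v` : the number of non-returning walks of `i + 1` edges whose
first edge is the directed edge `(u, v)`. -/
noncomputable def nE (G : SimpleGraph V) (i : ℕ) (u v : V) : ℕ :=
  Nat.card {w : Fin (i + 2) → V // IsNR G (i + 1) w ∧ w 0 = u ∧ w 1 = v}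

/-!
Two non-returning walks from the same vertex, of lengths `i` and `j` with `i + j` below the girth,
that end at the same vertex coincide. By induction on `i + j`: if they meet at some intermediate
pair of positions, split both there and apply induction to the two halves; otherwise, following
the first walk and then the second one backwards is a cycle of length `i + j`, which is too short.
(That closed walk repeats no vertex because a non-returning walk shorter than the girth does
not: a shortest repetition would close a cycle.) For girth `2r + 1`, the map sending a
non-returning walk of length at most `r` from `v` to its endpoint is therefore injective.
-/

namespace SimpleGraph

variable {G : SimpleGraph V}

/-- `IsNR` for a sequence `ℕ → V` of which only the terms `f 0, …, f n` matter; subwalks are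
then just shifts and truncations of the same sequence. -/
def IsNonReturningSeq (G : SimpleGraph V) (n : ℕ) (f : ℕ → V) : Prop :=
  (∀ k < n, G.Adj (f k) (f (k + 1))) ∧ ∀ k, k + 2 ≤ n → f k ≠ f (k + 2)

namespace IsNonReturningSeq

variable {n : ℕ} {f : ℕ → V}

theorem mono (hf : G.IsNonReturningSeq n f) {m : ℕ} (hmn : m ≤ n) : G.IsNonReturningSeq m f :=
  ⟨fun k hk => hf.1 k (by omega), fun k hk => hf.2 k (by omega)⟩

theorem shift (hf : G.IsNonReturningSeq n f) (a : ℕ) :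
    G.IsNonReturningSeq (n - a) (fun k => f (a + k)) :=
  ⟨fun k hk => hf.1 (a + k) (by omega), fun k hk => hf.2 (a + k) (by omega)⟩

end IsNonReturningSeq

def walkOfSeq (G : SimpleGraph V) (f : ℕ → V) :
    ∀ n, (∀ k < n, G.Adj (f k) (f (k + 1))) → G.Walk (f 0) (f n)
  | 0, _ => Walk.nil
  | n + 1, h => (walkOfSeq G f n fun k hk => h k (by omega)).concat (h n (by omega))

theorem length_walkOfSeq (f : ℕ → V) (n : ℕ) (h : ∀ k < n, G.Adj (f k) (f (k + 1))) :
    (walkOfSeq G f n h).length = n := by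
  induction n with
  | zero => rfl
  | succ n ih => simp [walkOfSeq, ih]

theorem support_walkOfSeq (f : ℕ → V) (n : ℕ) (h : ∀ k < n, G.Adj (f k) (f (k + 1))) :
    (walkOfSeq G f n h).support = (List.range (n + 1)).map f := by
  induction n with
  | zero => rfl
  | succ n ih => simp [walkOfSeq, Walk.support_concat, ih, List.range_succ]

theorem egirth_le_of_closed_seq {L : ℕ} {f : ℕ → V} (hadj : ∀ k < L, G.Adj (f k) (f (k + 1)))
    (hclosed : f L = f 0) (hinj : Set.InjOn f (Set.Ioc 0 L)) (hL : 3 ≤ L) :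
    G.egirth ≤ L := by
  set c : G.Walk (f 0) (f 0) := (walkOfSeq G f L hadj).copy rfl hclosed
  have hlen : c.length = L := by simp [c, length_walkOfSeq]
  have hcyc : c.IsCycle := by
    rw [Walk.isCycle_iff_isPath_tail_and_le_length, Walk.isPath_def,
      Walk.support_tail_of_not_nil _ (by rw [← Walk.length_eq_zero_iff, hlen]; omega), hlen]
    refine ⟨?_, hL⟩
    simp only [c, Walk.support_copy, support_walkOfSeq, List.range_succ_eq_map, List.map_cons,
      List.tail_cons, List.map_map]
    refine List.nodup_range.map_on fun a ha b hb hab => Nat.succ_injective (hinj ?_ ?_ hab) <;>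
      simp_all [Set.mem_Ioc]
  simpa [hlen] using G.egirth_le_length hcyc

theorem IsNonReturningSeq.injOn {n : ℕ} {f : ℕ → V} (hf : G.IsNonReturningSeq n f)
    (hn : (n : ℕ∞) < G.egirth) : Set.InjOn f (Set.Iic n) := by
  induction n generalizing f with
  | zero => exact fun a ha b hb _ => (Nat.le_zero.1 ha).trans (Nat.le_zero.1 hb).symm
  | succ n ih =>
    have hn' : (n : ℕ∞) < G.egirth := lt_of_le_of_lt (by exact_mod_cast n.le_succ) hn
    have hinit : Set.InjOn f (Set.Iic n) := ih (hf.mono n.le_succ) hn'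
    have htail : Set.InjOn f (Set.Ioc 0 (n + 1)) := by
      rintro a ⟨ha0, ha⟩ b ⟨hb0, hb⟩ hab
      have := ih (hf.shift 1) hn' (show a - 1 ∈ Set.Iic n by simp; omega)
        (show b - 1 ∈ Set.Iic n by simp; omega)
        (by simpa only [Nat.add_sub_cancel' ha0, Nat.add_sub_cancel' hb0] using hab)
      omega
    have hopen : f 0 ≠ f (n + 1) := by
      intro hclosed
      rcases (by omega : n = 0 ∨ n = 1 ∨ 2 ≤ n) with rfl | rfl | hn2
      · exact (hf.1 0 Nat.one_pos).ne hclosed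
      · exact hf.2 0 le_rfl hclosed
      · exact (egirth_le_of_closed_seq hf.1 hclosed.symm htail (by omega)).not_gt hn
    intro a ha b hb hab
    simp only [Set.mem_Iic] at ha hb
    by_cases hle : a ≤ n ∧ b ≤ n
    · exact hinit hle.1 hle.2 hab
    by_cases hpos : 0 < a ∧ 0 < b
    · exact htail ⟨hpos.1, ha⟩ ⟨hpos.2, hb⟩ hab
    rcases (by omega : a = 0 ∧ b = n + 1 ∨ a = n + 1 ∧ b = 0) with ⟨rfl, rfl⟩ | ⟨rfl, rfl⟩
    · exact absurd hab hopen
    · exact absurd hab.symm hopen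

theorem egirth_le_of_crossing_free {i j : ℕ} {f g : ℕ → V}
    (hf : ∀ k < i, G.Adj (f k) (f (k + 1))) (hg : ∀ k < j, G.Adj (g k) (g (k + 1)))
    (finj : Set.InjOn f (Set.Iic i)) (ginj : Set.InjOn g (Set.Iic j))
    (h0 : f 0 = g 0) (hend : f i = g j)
    (hcross : ∀ a ≤ i, ∀ b ≤ j, f a = g b → 0 < a + b → i + j ≤ a + b) (hij : 3 ≤ i + j) :
    G.egirth ≤ (i + j : ℕ) := by
  -- `c` runs along `f` and then back along `g`; crossing-freeness makes it a cycle.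
  set c : ℕ → V := fun k => if k ≤ i then f k else g (i + j - k) with hc
  have hc_le : ∀ k ≤ i, c k = f k := fun k hk => if_pos hk
  have hc_ge : ∀ k ≥ i, c k = g (i + j - k) := by
    intro k hk
    rcases hk.eq_or_lt with rfl | hk
    · simp [hc, hend]
    · exact if_neg (by omega)
  refine egirth_le_of_closed_seq (f := c) (fun k hk => ?_) ?_ ?_ hij
  · rcases Nat.lt_or_ge k i with hki | hki
    · rw [hc_le k hki.le, hc_le (k + 1) hki]
      exact hf k hki
    · rw [hc_ge k hki, hc_ge (k + 1) (by omega)]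
      have := hg (i + j - (k + 1)) (by omega)
      rwa [show i + j - (k + 1) + 1 = i + j - k by omega, G.adj_comm] at this
  · rw [hc_ge _ (by omega), hc_le 0 (by omega), Nat.sub_self, h0]
  · rintro a ⟨ha0, ha⟩ b ⟨hb0, hb⟩ hab
    wlog hle : a ≤ b generalizing a b
    · exact (this hb0 hb ha0 ha hab.symm (by omega)).symm
    rcases Nat.lt_or_ge i b with hib | hbi
    · rcases Nat.lt_or_ge i a with hia | hai
      · rw [hc_ge a hia.le, hc_ge b hib.le] at hab
        have := ginj (show i + j - a ∈ Set.Iic j by simp; omega)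
          (show i + j - b ∈ Set.Iic j by simp; omega) hab
        omega
      · rw [hc_le a hai, hc_ge b hib.le] at hab
        have := hcross a hai (i + j - b) (by omega) hab (by omega)
        omega
    · rw [hc_le a (by omega), hc_le b hbi] at hab
      exact finj (show a ∈ Set.Iic i by simp; omega) (show b ∈ Set.Iic i by simp; omega) hab

theorem IsNonReturningSeq.eq_of_endpoints {i j : ℕ} {f g : ℕ → V}
    (hf : G.IsNonReturningSeq i f) (hg : G.IsNonReturningSeq j g)
    (hlt : ((i + j : ℕ) : ℕ∞) < G.egirth) (h0 : f 0 = g 0) (hend : f i = g j) :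
    i = j ∧ Set.EqOn f g (Set.Iic i) := by
  induction hn : i + j using Nat.strong_induction_on generalizing i j f g with
  | _ n ih =>
  subst hn
  have finj := hf.injOn (lt_of_le_of_lt (by exact_mod_cast i.le_add_right j) hlt)
  have ginj := hg.injOn (lt_of_le_of_lt (by exact_mod_cast j.le_add_left i) hlt)
  by_cases hcross : ∃ a ≤ i, ∃ b ≤ j, f a = g b ∧ 0 < a + b ∧ a + b < i + j
  · obtain ⟨a, ha, b, hb, hab, hpos, hsum⟩ := hcross
    obtain ⟨rfl, hpre⟩ := ih (a + b) hsum (hf.mono ha) (hg.mono hb)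
      (lt_of_le_of_lt (by exact_mod_cast hsum.le) hlt) h0 hab rfl
    obtain ⟨hij, hsuf⟩ := ih ((i - a) + (j - a)) (by omega) (hf.shift a) (hg.shift a)
      (lt_of_le_of_lt (by exact_mod_cast (by omega : i - a + (j - a) ≤ i + j)) hlt)
      (by simpa using hab)
      (by simpa [Nat.add_sub_cancel' ha, Nat.add_sub_cancel' hb] using hend) rfl
    refine ⟨by omega, fun k hk => ?_⟩
    rcases le_or_gt k a with hka | hka
    · exact hpre hka
    · simpa [Nat.add_sub_cancel' hka.le] using
        hsuf (show k - a ∈ Set.Iic (i - a) by simp at hk ⊢; omega)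
  push Not at hcross
  rcases Nat.eq_zero_or_pos i with rfl | hi
  · obtain rfl : j = 0 := ginj (by simp) (by simp) (hend.symm.trans h0)
    exact ⟨rfl, fun k hk => by obtain rfl := Nat.le_zero.1 hk; exact h0⟩
  rcases Nat.eq_zero_or_pos j with rfl | hj
  · obtain rfl : i = 0 := finj (by simp) (by simp) (hend.trans h0.symm)
    omega
  by_cases h11 : i = 1 ∧ j = 1
  · obtain ⟨rfl, rfl⟩ := h11
    exact ⟨rfl, fun k hk => by
      obtain rfl | rfl := Nat.le_one_iff_eq_zero_or_eq_one.1 hk <;> assumption⟩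
  exact absurd hlt (egirth_le_of_crossing_free hf.1 hg.1 finj ginj h0 hend hcross
    (by omega)).not_gt

end SimpleGraph

theorem Fin.clamp_of_le {k n : ℕ} (hk : k ≤ n) : Fin.clamp k n = ⟨k, Nat.lt_succ_of_le hk⟩ :=
  Fin.ext (by simp [hk])

theorem IsNR.isNonReturningSeq {G : SimpleGraph V} {i : ℕ} {w : Fin (i + 1) → V}
    (hw : IsNR G i w) : G.IsNonReturningSeq i (fun k => w (Fin.clamp k i)) := by
  refine ⟨fun k hk => ?_, fun k hk => ?_⟩
  · simpa only [Fin.clamp_of_le hk.le, Fin.clamp_of_le hk] using hw.1 k hk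
  · simpa only [Fin.clamp_of_le (by omega : k ≤ i), Fin.clamp_of_le hk] using hw.2 k hk

theorem IsNR.eq_of_last_eq {G : SimpleGraph V} {i j : ℕ} {w : Fin (i + 1) → V}
    {w' : Fin (j + 1) → V} (hw : IsNR G i w) (hw' : IsNR G j w')
    (hlt : ((i + j : ℕ) : ℕ∞) < G.egirth) (h0 : w 0 = w' 0)
    (hend : w (Fin.last i) = w' (Fin.last j)) : i = j ∧ HEq w w' := by
  obtain ⟨rfl, heq⟩ := hw.isNonReturningSeq.eq_of_endpoints hw'.isNonReturningSeq hlt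
    (by simpa [Fin.clamp_of_le] using h0)
    (by rw [Fin.clamp_of_le le_rfl, Fin.clamp_of_le le_rfl]; exact hend)
  refine ⟨rfl, heq_of_eq (funext fun k => ?_)⟩
  simpa [Fin.clamp_of_le k.is_le] using heq (show (k : ℕ) ∈ Set.Iic i from k.is_le)

theorem count_nonreturning_walks_odd_girth {V : Type*} [Fintype V] (G : SimpleGraph V)
    (r : ℕ) (hg : G.girth = 2 * r + 1) (v : V) :
    Fintype.card V ≥ ∑ i ∈ Finset.range (r + 1), nV G i v := by
  have hegirth : G.egirth = (2 * r + 1 : ℕ) := by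
    rw [← hg, SimpleGraph.girth, ENat.natCast_toNat]
    intro htop
    simp [SimpleGraph.girth, htop] at hg
  let endpoint (x : Σ i : Fin (r + 1), {w : Fin (i + 1) → V // IsNR G i w ∧ w 0 = v}) : V :=
    x.2.1 (Fin.last x.1)
  have hinj : endpoint.Injective := by
    rintro ⟨⟨i, hi⟩, w, hw, hw0⟩ ⟨⟨j, hj⟩, w', hw', hw0'⟩ hend
    obtain ⟨rfl, heq⟩ := hw.eq_of_last_eq hw' (by rw [hegirth]; exact_mod_cast (by omega))
      (hw0.trans hw0'.symm) hend
    obtain rfl := eq_of_heq heq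
    rfl
  calc ∑ i ∈ Finset.range (r + 1), nV G i v
      = Nat.card (Σ i : Fin (r + 1), {w : Fin (i + 1) → V // IsNR G i w ∧ w 0 = v}) := by
        rw [Nat.card_sigma, ← Fin.sum_univ_eq_sum_range (fun i => nV G i v)]
        rfl
    _ ≤ Nat.card V := Nat.card_le_card_of_injective _ hinj
    _ = Fintype.card V := Nat.card_eq_fintype_card
end

section
/- Let G be a simple undirected graph with n vertices, girth g = 2r+1, minimum degree at least 2, and average degree d̄. Then n ≥ 1 + d̄·∑_{i=0}^{r-1} (d̄-1)^i. -/
/-!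
If `p ≠ q` are non-backtracking walks with the same ends, then after removing their longest
common prefix `p⁻¹ q` is a non-backtracking closed walk, which contains a cycle of length at most
`|p| + |q|`. As `G` has no cycle of length at most `2r`, there is at most one non-backtracking
walk of length at most `r` between any two vertices, hence at most `n²` of them in all.

Conversely, let `c k u v` count the non-backtracking walks of length `k` continuing the step
`u → v`, so that `c (k + 1) u v = ∑_{w ∼ v, w ≠ u} c k v w`. By AM–GM (concavity of `log`) each
step adds at least `∑ᵥ deg v · log (deg v - 1)` to `∑_{u ∼ v} log c k u v`, and by convexity of
`x ↦ x log (x - 1)` on `[2, ∞)` this is at least `n d̄ log (d̄ - 1)`. AM–GM once more gives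
`∑_{u ∼ v} c k u v ≥ n d̄ (d̄ - 1)ᵏ`, and summing over `k < r` yields `n² ≥ n (1 + d̄ ∑ (d̄ - 1)ⁱ)`.
-/

open Finset Real

namespace SimpleGraph

variable {V : Type*} {G : SimpleGraph V}

namespace Walk

variable {u v w : V}

def IsNonBacktracking (p : G.Walk u v) : Prop :=
  p.edges.IsChain (· ≠ ·)

lemma isNonBacktracking_cons_iff (h : G.Adj u v) (p : G.Walk v w) :
    (cons h p).IsNonBacktracking ↔ p.IsNonBacktracking ∧ p.snd ≠ u := by
  cases p with
  | nil => simpa [IsNonBacktracking] using h.ne'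
  | @cons _ x _ h' p =>
    have : s(u, v) ≠ s(v, x) ↔ x ≠ u := by
      rw [Ne, Sym2.eq_swap, Sym2.congr_right, eq_comm]
    simp only [IsNonBacktracking, edges_cons, List.isChain_cons_cons, getVert_cons_succ,
      getVert_zero, this, and_comm]

lemma IsNonBacktracking.reverse {p : G.Walk u v} (hp : p.IsNonBacktracking) :
    p.reverse.IsNonBacktracking := by
  rw [IsNonBacktracking, edges_reverse, List.isChain_reverse]
  exact hp.imp fun _ _ h => h.symm

lemma IsNonBacktracking.append {p : G.Walk u v} {q : G.Walk v w} (hp : p.IsNonBacktracking)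
    (hq : q.IsNonBacktracking)
    (hpq : ∀ e ∈ p.edges.getLast?, ∀ e' ∈ q.edges.head?, e ≠ e') :
    (p.append q).IsNonBacktracking := by
  rw [IsNonBacktracking, edges_append, List.isChain_append]
  exact ⟨hp, hq, hpq⟩

variable [DecidableEq V]

theorem IsNonBacktracking.egirth_le_length_of_not_isPath :
    ∀ {u v : V} {p : G.Walk u v}, p.IsNonBacktracking → ¬ p.IsPath → G.egirth ≤ p.length
  | _, _, nil, _, hpath => absurd IsPath.nil hpath
  | u, _, cons huw p, hnb, hpath => by
    rw [isNonBacktracking_cons_iff] at hnb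
    by_cases hp : p.IsPath
    · have hu : u ∈ p.support := by simpa [cons_isPath_iff, hp] using hpath
      have hcyc : (cons huw (p.takeUntil u hu)).IsCycle := by
        refine (cons_isCycle_iff _ huw).2 ⟨hp.takeUntil hu, fun he => hnb.2 ?_⟩
        -- a path that uses the edge back to `u` must take it first
        exact (hp.eq_snd_of_mem_edges
          (Sym2.eq_swap ▸ p.edges_takeUntil_subset_edges hu he)).symm
      calc G.egirth ≤ (cons huw (p.takeUntil u hu)).length := egirth_le_length hcyc
        _ ≤ (cons huw p).length := by simpa using p.length_takeUntil_le_length hu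
    · exact (hnb.1.egirth_le_length_of_not_isPath hp).trans (by simp)

theorem IsNonBacktracking.egirth_le_length {p : G.Walk u u} (hp : p.IsNonBacktracking)
    (hne : ¬ p.Nil) : G.egirth ≤ p.length :=
  hp.egirth_le_length_of_not_isPath (isPath_iff_nil.not.2 hne)

theorem IsNonBacktracking.egirth_le_length_add_length {p q : G.Walk u v}
    (hp : p.IsNonBacktracking) (hq : q.IsNonBacktracking) (hpq : p ≠ q) :
    G.egirth ≤ (p.length + q.length : ℕ) := by
  induction p with
  | nil =>
    cases q with
    | nil => exact absurd rfl hpq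
    | cons h q => simpa using hq.egirth_le_length not_nil_cons
  | @cons _ b _ h₁ p ih =>
    cases q with
    | nil => simpa using hp.egirth_le_length not_nil_cons
    | @cons _ b' _ h₂ q =>
      by_cases hb : b = b'
      · subst hb
        rw [isNonBacktracking_cons_iff] at hp hq
        exact (ih hp.1 hq.1 fun h => hpq (h ▸ rfl)).trans (Nat.cast_le.2 (by simp; omega))
      · have hW : ((cons h₁ p).reverse.append (cons h₂ q)).IsNonBacktracking :=
          hp.reverse.append hq (by simp [List.getLast?_reverse, hb, h₁.ne'])
        simpa using hW.egirth_le_length (by simp)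

end Walk

end SimpleGraph

namespace Real

lemma sum_log_div_card_le_log_sum_div_card {ι : Type*} {s : Finset ι} (hs : s.Nonempty)
    {a : ι → ℝ} (ha : ∀ i ∈ s, 0 < a i) :
    (∑ i ∈ s, log (a i)) / #s ≤ log ((∑ i ∈ s, a i) / #s) := by
  have hcard : (0 : ℝ) < #s := by exact_mod_cast hs.card_pos
  have := strictConcaveOn_log_Ioi.concaveOn.le_map_sum (t := s) (w := fun _ => (#s : ℝ)⁻¹)
    (p := a) (fun _ _ => by positivity) (by simp [hcard.ne']) ha
  simpa only [smul_eq_mul, inv_mul_eq_div, ← sum_div] using this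

lemma convexOn_mul_log_sub_one : ConvexOn ℝ (Set.Ici 2) fun x => x * log (x - 1) := by
  have hlog : ∀ x : ℝ, 1 < x → HasDerivAt (fun x => log (x - 1)) (1 / (x - 1)) x := fun x hx =>
    by simpa using ((hasDerivAt_id x).sub_const 1).log (by simp; linarith)
  refine convexOn_of_hasDerivWithinAt2_nonneg (convex_Ici 2)
    (f' := fun x => log (x - 1) + x / (x - 1)) (f'' := fun x => (x - 2) / (x - 1) ^ 2)
    ?_ (fun x hx => ?_) (fun x hx => ?_) (fun x hx => ?_)
  · exact continuousOn_id.mul ((continuousOn_id.sub continuousOn_const).log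
      fun x hx => by simp only [Set.mem_Ici] at hx; simp; linarith)
  all_goals simp only [interior_Ici, Set.mem_Ioi] at hx ⊢
  · have hx1 : x - 1 ≠ 0 := by linarith
    refine (((hasDerivAt_id' x).mul (hlog x (by linarith))).congr_deriv ?_).hasDerivWithinAt
    field_simp
  · have hx1 : x - 1 ≠ 0 := by linarith
    refine (((hlog x (by linarith)).add ((hasDerivAt_id' x).div
      ((hasDerivAt_id' x).sub_const 1) hx1)).congr_deriv ?_).hasDerivWithinAt
    field_simp; ring
  · exact div_nonneg (by linarith) (sq_nonneg _)

lemma sum_mul_log_div_card_sub_one_le {ι : Type*} {s : Finset ι} (hs : s.Nonempty)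
    {a : ι → ℝ} (ha : ∀ i ∈ s, 2 ≤ a i) :
    (∑ i ∈ s, a i) * log ((∑ i ∈ s, a i) / #s - 1) ≤ ∑ i ∈ s, a i * log (a i - 1) := by
  have hcard : (0 : ℝ) < #s := by exact_mod_cast hs.card_pos
  have := convexOn_mul_log_sub_one.map_sum_le (t := s) (w := fun _ => (#s : ℝ)⁻¹)
    (p := a) (fun _ _ => by positivity) (by simp [hcard.ne']) ha
  simp only [smul_eq_mul, inv_mul_eq_div, ← sum_div] at this
  calc (∑ i ∈ s, a i) * log ((∑ i ∈ s, a i) / #s - 1)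
      = #s * ((∑ i ∈ s, a i) / #s * log ((∑ i ∈ s, a i) / #s - 1)) := by field_simp
    _ ≤ ∑ i ∈ s, a i * log (a i - 1) := by rwa [← le_div_iff₀' hcard]

end Real

lemma Finset.sum_sum_erase {ι M : Type*} [DecidableEq ι] [AddCommMonoid M] (s : Finset ι)
    (f : ι → M) : ∑ i ∈ s, ∑ j ∈ s.erase i, f j = (#s - 1) • ∑ j ∈ s, f j := by
  rw [sum_comm' (t' := s) (s' := s.erase) fun i j => by rw [mem_erase, mem_erase, ne_comm]; tauto,
    smul_sum]
  exact sum_congr rfl fun j hj => by rw [sum_const, card_erase_of_mem hj]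

namespace SimpleGraph

variable {V : Type*} (G : SimpleGraph V) [Fintype V] [DecidableRel G.Adj]

lemma sum_sum_neighborFinset_comm {M : Type*} [AddCommMonoid M] (f : V → V → M) :
    ∑ u, ∑ v ∈ G.neighborFinset u, f u v = ∑ v, ∑ u ∈ G.neighborFinset v, f u v :=
  sum_comm' fun u v => by simp [G.adj_comm]

variable [DecidableEq V]

/-- The recursion satisfied, with equality, by the number `c k u v` of non-backtracking walks of
length `k` continuing the step `u → v`. -/
structure IsNonBacktrackingSupersolution (c : ℕ → V → V → ℝ) : Prop where
  one_le_zero : ∀ u v, G.Adj u v → 1 ≤ c 0 u v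
  sum_le_succ : ∀ k u v, G.Adj u v →
    ∑ w ∈ (G.neighborFinset v).erase u, c k v w ≤ c (k + 1) u v

variable {G}

namespace IsNonBacktrackingSupersolution

variable {c : ℕ → V → V → ℝ}

lemma one_le (hc : G.IsNonBacktrackingSupersolution c) (hdeg : ∀ v, 2 ≤ G.degree v) :
    ∀ k u v, G.Adj u v → 1 ≤ c k u v := by
  intro k
  induction k with
  | zero => exact hc.one_le_zero
  | succ k ih =>
    intro u v huv
    have hcard : 1 ≤ #((G.neighborFinset v).erase u) := by
      rw [card_erase_of_mem ((G.mem_neighborFinset v u).2 huv.symm),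
        card_neighborFinset_eq_degree]
      have := hdeg v
      omega
    calc (1 : ℝ) ≤ #((G.neighborFinset v).erase u) • (1 : ℝ) := by simpa using hcard
      _ ≤ ∑ w ∈ (G.neighborFinset v).erase u, c k v w := card_nsmul_le_sum _ _ _ fun w hw =>
          ih v w ((G.mem_neighborFinset v w).1 (mem_of_mem_erase hw))
      _ ≤ c (k + 1) u v := hc.sum_le_succ k u v huv

lemma log_degree_sub_one_add_le (hc : G.IsNonBacktrackingSupersolution c)
    (hdeg : ∀ v, 2 ≤ G.degree v) (k : ℕ) {u v : V} (huv : G.Adj u v) :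
    log (G.degree v - 1)
        + (∑ w ∈ (G.neighborFinset v).erase u, log (c k v w)) / (G.degree v - 1)
      ≤ log (c (k + 1) u v) := by
  set s := (G.neighborFinset v).erase u
  have hs : (#s : ℝ) = G.degree v - 1 := by
    rw [card_erase_of_mem ((G.mem_neighborFinset v u).2 huv.symm), card_neighborFinset_eq_degree,
      Nat.cast_sub (by linarith [hdeg v]), Nat.cast_one]
  have hd : (2 : ℝ) ≤ G.degree v := by exact_mod_cast hdeg v
  have hs_pos : (0 : ℝ) < #s := by rw [hs]; linarith
  have hs_ne : s.Nonempty := card_pos.1 (by exact_mod_cast hs_pos)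
  have hc_pos : ∀ w ∈ s, 0 < c k v w := fun w hw => zero_lt_one.trans_le
    (hc.one_le hdeg k v w ((G.mem_neighborFinset v w).1 (mem_of_mem_erase hw)))
  have hamgm := sum_log_div_card_le_log_sum_div_card hs_ne hc_pos
  rw [log_div (sum_pos hc_pos hs_ne).ne' hs_pos.ne', hs] at hamgm
  linarith [log_le_log (sum_pos hc_pos hs_ne) (hc.sum_le_succ k u v huv)]

lemma sum_degree_mul_log_add_le (hc : G.IsNonBacktrackingSupersolution c)
    (hdeg : ∀ v, 2 ≤ G.degree v) (k : ℕ) :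
    ∑ v, (G.degree v : ℝ) * log (G.degree v - 1)
        + ∑ u, ∑ v ∈ G.neighborFinset u, log (c k u v)
      ≤ ∑ u, ∑ v ∈ G.neighborFinset u, log (c (k + 1) u v) := by
  have hdegree : ∑ u, ∑ v ∈ G.neighborFinset u, log ((G.degree v : ℝ) - 1)
      = ∑ v, (G.degree v : ℝ) * log (G.degree v - 1) := by
    rw [sum_sum_neighborFinset_comm]
    simp [card_neighborFinset_eq_degree]
  have hmean : ∑ u, ∑ v ∈ G.neighborFinset u,
        (∑ w ∈ (G.neighborFinset v).erase u, log (c k v w)) / (G.degree v - 1)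
      = ∑ u, ∑ v ∈ G.neighborFinset u, log (c k u v) := by
    rw [sum_sum_neighborFinset_comm]
    refine sum_congr rfl fun v _ => ?_
    have hd : (2 : ℝ) ≤ G.degree v := by exact_mod_cast hdeg v
    rw [← sum_div, sum_sum_erase, card_neighborFinset_eq_degree, nsmul_eq_mul,
      Nat.cast_sub (by linarith [hdeg v]), Nat.cast_one, mul_div_cancel_left₀ _ (by linarith)]
  rw [← hdegree, ← hmean]
  simp only [← sum_add_distrib]
  exact sum_le_sum fun u _ => sum_le_sum fun v hv =>
    hc.log_degree_sub_one_add_le hdeg k ((G.mem_neighborFinset u v).1 hv)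

lemma nat_mul_log_le_sum_log [Nonempty V] (hc : G.IsNonBacktrackingSupersolution c)
    (hdeg : ∀ v, 2 ≤ G.degree v) (k : ℕ) :
    k * ((∑ v, (G.degree v : ℝ)) * log ((∑ v, (G.degree v : ℝ)) / Fintype.card V - 1))
      ≤ ∑ u, ∑ v ∈ G.neighborFinset u, log (c k u v) := by
  induction k with
  | zero =>
    simpa using sum_nonneg fun u _ => sum_nonneg fun v hv =>
      log_nonneg (hc.one_le_zero u v ((G.mem_neighborFinset u v).1 hv))
  | succ k ih =>
    have hjensen := sum_mul_log_div_card_sub_one_le (s := univ) univ_nonempty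
      (a := fun v => (G.degree v : ℝ)) fun v _ => by exact_mod_cast hdeg v
    rw [card_univ] at hjensen
    push_cast
    linarith [hc.sum_degree_mul_log_add_le hdeg k]

theorem sum_degree_mul_pow_le_sum [Nonempty V] (hc : G.IsNonBacktrackingSupersolution c)
    (hdeg : ∀ v, 2 ≤ G.degree v) (k : ℕ) :
    (∑ v, (G.degree v : ℝ)) * ((∑ v, (G.degree v : ℝ)) / Fintype.card V - 1) ^ k
      ≤ ∑ u, ∑ v ∈ G.neighborFinset u, c k u v := by
  set M := ∑ v, (G.degree v : ℝ)
  set n : ℝ := (Fintype.card V : ℝ)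
  set s := univ.sigma fun u => G.neighborFinset u
  have hn : 0 < n := by positivity
  have hM : 2 * n ≤ M := by
    simpa [mul_comm] using sum_le_sum fun v (_ : v ∈ univ) =>
      (by exact_mod_cast hdeg v : (2 : ℝ) ≤ G.degree v)
  have hμ : 1 ≤ M / n - 1 := by rw [le_sub_iff_add_le, le_div_iff₀ hn]; linarith
  have hs : (#s : ℝ) = M := by simp [s, M, card_sigma, card_neighborFinset_eq_degree]
  have hs_ne : s.Nonempty := card_pos.1 (by exact_mod_cast (show (0 : ℝ) < #s by linarith))
  have hc_pos : ∀ x ∈ s, 0 < c k x.1 x.2 := fun x hx => zero_lt_one.trans_le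
    (hc.one_le hdeg k _ _ ((G.mem_neighborFinset _ _).1 (mem_sigma.1 hx).2))
  have hN : 0 < ∑ u, ∑ v ∈ G.neighborFinset u, c k u v := by
    simpa only [s, sum_sigma] using sum_pos hc_pos hs_ne
  have hamgm := sum_log_div_card_le_log_sum_div_card hs_ne hc_pos
  rw [hs, sum_sigma, sum_sigma] at hamgm
  have hlog : log ((M / n - 1) ^ k) ≤ log ((∑ u, ∑ v ∈ G.neighborFinset u, c k u v) / M) := by
    rw [log_pow]
    refine le_trans ?_ hamgm
    rw [le_div_iff₀ (by linarith)]
    linarith [hc.nat_mul_log_le_sum_log hdeg k]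
  rw [← le_div_iff₀' (by linarith)]
  exact (log_le_log_iff (pow_pos (by linarith) k) (div_pos hN (by linarith))).1 hlog

end IsNonBacktrackingSupersolution

-- Taking `u = v` imposes nothing on the first edge, since `s(v, v)` is not an edge.
variable (G) in
def nonBacktrackingExtensions (k : ℕ) (u v z : V) : Finset (G.Walk v z) :=
  (G.finsetWalkLength k v z).filter fun p => (s(u, v) :: p.edges).IsChain (· ≠ ·)

variable (G) in
def nonBacktrackingExtensionCount (k : ℕ) (u v : V) : ℕ :=
  ∑ z, #(G.nonBacktrackingExtensions k u v z)

variable {k : ℕ} {u v z : V}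

lemma mem_nonBacktrackingExtensions {p : G.Walk v z} :
    p ∈ G.nonBacktrackingExtensions k u v z ↔
      p.length = k ∧ (s(u, v) :: p.edges).IsChain (· ≠ ·) := by
  rw [nonBacktrackingExtensions, mem_filter, mem_finsetWalkLength_iff]

lemma one_le_nonBacktrackingExtensionCount_zero (u v : V) :
    1 ≤ G.nonBacktrackingExtensionCount 0 u v := by
  have hnil : Walk.nil ∈ G.nonBacktrackingExtensions 0 u v v :=
    mem_nonBacktrackingExtensions.2 ⟨rfl, by simp⟩
  exact (card_pos.2 ⟨_, hnil⟩).trans_le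
    (single_le_sum (f := fun z => #(G.nonBacktrackingExtensions 0 u v z))
      (fun _ _ => Nat.zero_le _) (mem_univ v))

lemma sum_card_nonBacktrackingExtensions_le (k : ℕ) (u v z : V) :
    ∑ w ∈ (G.neighborFinset v).erase u, #(G.nonBacktrackingExtensions k v w z)
      ≤ #(G.nonBacktrackingExtensions (k + 1) u v z) := by
  rw [← card_sigma]
  refine card_le_card_of_injective (f := fun x => ⟨Walk.cons ?_ x.1.2, ?_⟩) ?_
  · exact (G.mem_neighborFinset v _).1 (mem_of_mem_erase (mem_sigma.1 x.2).1)
  · obtain ⟨hw, hq⟩ := mem_sigma.1 x.2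
    obtain ⟨hlen, hchain⟩ := mem_nonBacktrackingExtensions.1 hq
    refine mem_nonBacktrackingExtensions.2 ⟨by simp [hlen], ?_⟩
    rw [Walk.edges_cons, List.isChain_cons_cons, Ne, Sym2.eq_swap, Sym2.congr_right]
    exact ⟨fun h => (ne_of_mem_erase hw) h.symm, hchain⟩
  · rintro ⟨⟨w, q⟩, _⟩ ⟨⟨w', q'⟩, _⟩ h
    obtain ⟨rfl, hqq'⟩ := Walk.cons.inj (congrArg Subtype.val h)
    cases hqq'
    rfl

lemma sum_nonBacktrackingExtensionCount_le (k : ℕ) (u v : V) :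
    ∑ w ∈ (G.neighborFinset v).erase u, G.nonBacktrackingExtensionCount k v w
      ≤ G.nonBacktrackingExtensionCount (k + 1) u v := by
  simp only [nonBacktrackingExtensionCount]
  rw [sum_comm]
  exact sum_le_sum fun z _ => sum_card_nonBacktrackingExtensions_le k u v z

lemma sum_range_card_nonBacktrackingExtensions_le_one {r : ℕ}
    (hr : ((2 * r : ℕ) : ℕ∞) < G.egirth) (u v z : V) :
    ∑ k ∈ range (r + 1), #(G.nonBacktrackingExtensions k u v z) ≤ 1 := by
  rw [← card_biUnion]
  · refine card_le_one.2 fun p hp q hq => ?_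
    simp only [mem_biUnion, mem_range, mem_nonBacktrackingExtensions] at hp hq
    obtain ⟨_, hk, rfl, hp⟩ := hp
    obtain ⟨_, hk', rfl, hq⟩ := hq
    by_contra hpq
    have hlen : ((p.length + q.length : ℕ) : ℕ∞) ≤ (2 * r : ℕ) := Nat.cast_le.2 (by omega)
    exact (hr.trans_le
      (Walk.IsNonBacktracking.egirth_le_length_add_length hp.tail hq.tail hpq)).not_ge hlen
  · exact fun k _ k' _ hkk' => Finset.disjoint_left.2 fun p hp hp' =>
      hkk' ((mem_nonBacktrackingExtensions.1 hp).1.symm.trans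
        (mem_nonBacktrackingExtensions.1 hp').1)

variable (G) in
lemma card_le_sum_nonBacktrackingExtensionCount_zero :
    Fintype.card V ≤ ∑ v, G.nonBacktrackingExtensionCount 0 v v := by
  simpa using sum_le_sum fun v (_ : v ∈ univ) => one_le_nonBacktrackingExtensionCount_zero v v

lemma sum_range_sum_nonBacktrackingExtensionCount_le {r : ℕ}
    (hr : ((2 * r : ℕ) : ℕ∞) < G.egirth) :
    ∑ k ∈ range (r + 1), ∑ v, G.nonBacktrackingExtensionCount k v v
      ≤ Fintype.card V * Fintype.card V := by
  simp only [nonBacktrackingExtensionCount]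
  calc _ = ∑ v, ∑ z, ∑ k ∈ range (r + 1), #(G.nonBacktrackingExtensions k v v z) := by
        rw [sum_comm]; exact sum_congr rfl fun v _ => sum_comm
    _ ≤ ∑ _v : V, ∑ _z : V, 1 := sum_le_sum fun v _ => sum_le_sum fun z _ =>
        sum_range_card_nonBacktrackingExtensions_le_one hr v v z
    _ = Fintype.card V * Fintype.card V := by simp

variable (G) in
lemma isNonBacktrackingSupersolution_nonBacktrackingExtensionCount :
    G.IsNonBacktrackingSupersolution fun k u v => (G.nonBacktrackingExtensionCount k u v : ℝ) where
  one_le_zero u v _ := by exact_mod_cast one_le_nonBacktrackingExtensionCount_zero u v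
  sum_le_succ k u v _ := by exact_mod_cast sum_nonBacktrackingExtensionCount_le k u v

theorem sum_degree_mul_pow_le_sum_nonBacktrackingExtensionCount [Nonempty V]
    (hdeg : ∀ v, 2 ≤ G.degree v) (k : ℕ) :
    (∑ v, (G.degree v : ℝ)) * ((∑ v, (G.degree v : ℝ)) / Fintype.card V - 1) ^ k
      ≤ ∑ v, (G.nonBacktrackingExtensionCount (k + 1) v v : ℝ) := by
  refine ((G.isNonBacktrackingSupersolution_nonBacktrackingExtensionCount
    ).sum_degree_mul_pow_le_sum hdeg k).trans (sum_le_sum fun v _ => ?_)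
  rw [← erase_eq_of_notMem (G.notMem_neighborFinset_self v)]
  exact_mod_cast sum_nonBacktrackingExtensionCount_le k v v

end SimpleGraph

open SimpleGraph

theorem alon_hoory_linial_odd_girth {V : Type*} [Fintype V] (G : SimpleGraph V)
    [DecidableRel G.Adj] (r : ℕ) (hmin : 2 ≤ G.minDegree) (hg : G.girth = 2 * r + 1)
    (d : ℝ) (hd : d = 2 * (G.edgeFinset.card : ℝ) / (Fintype.card V : ℝ)) :
    (Fintype.card V : ℝ) ≥ 1 + d * ∑ i ∈ Finset.range r, (d - 1) ^ i := by
  classical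
  have hG : ¬ G.IsAcyclic := fun h => by simp [h.girth_eq_zero] at hg
  have : Nonempty V := ⟨(exists_girth_eq_length.2 hG).choose⟩
  have hr : ((2 * r : ℕ) : ℕ∞) < G.egirth := by
    rw [← ENat.natCast_toNat (egirth_eq_top.not.2 hG), ← girth, hg]
    exact_mod_cast Nat.lt_succ_self _
  let N k := ∑ v, (G.nonBacktrackingExtensionCount k v v : ℝ)
  have hzero : (Fintype.card V : ℝ) ≤ N 0 := by
    simp only [N]; exact_mod_cast G.card_le_sum_nonBacktrackingExtensionCount_zero
  have hupper : ∑ k ∈ range (r + 1), N k ≤ (Fintype.card V * Fintype.card V : ℝ) := by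
    simp only [N]; exact_mod_cast sum_range_sum_nonBacktrackingExtensionCount_le hr
  have hlower := sum_degree_mul_pow_le_sum_nonBacktrackingExtensionCount
    (fun v => hmin.trans (G.minDegree_le_degree v))
  set n : ℝ := (Fintype.card V : ℝ)
  have hn : 0 < n := by positivity
  have hdeg_sum : ∑ v, (G.degree v : ℝ) = n * d := by
    rw [hd, mul_div_cancel₀ _ hn.ne']
    exact_mod_cast G.sum_degrees_eq_twice_card_edges
  rw [hdeg_sum, mul_div_cancel_left₀ _ hn.ne'] at hlower
  refine le_of_mul_le_mul_left ?_ hn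
  calc n * (1 + d * ∑ i ∈ range r, (d - 1) ^ i) = n + ∑ i ∈ range r, n * d * (d - 1) ^ i := by
        simp only [mul_add, mul_sum, mul_one, mul_assoc]
    _ ≤ N 0 + ∑ i ∈ range r, N (i + 1) := add_le_add hzero (sum_le_sum fun i _ => hlower i)
    _ = ∑ k ∈ range (r + 1), N k := by rw [sum_range_succ', add_comm]
    _ ≤ n * n := hupper
end

section
/- Let G be a simple graph with minimum degree at least 2 and average degree d̄. If e⃗ is a uniformly random directed edge of G, then for every i ≥ 0 the expected number of non-returning walks of i+1 edges starting with e⃗ satisfies E[n_i(e⃗)] ≥ (d̄-1)^i. -/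
variable {V : Type*}

/-! Weight each non-returning walk `w` with `i + 1` edges by `(branching G w)⁻¹`, the product
of `(deg v - 1)⁻¹` over its interior vertices `v`. Up to the factor `2|E| = ∑ deg`, this is the
law of the non-backtracking random walk started at a uniformly random directed edge, and peeling
off the first edge shows that this walk is stationary: each of its vertices is distributed
proportionally to the degree. The number `N` of walks is `2|E|` times the expectation of
`branching`, so Jensen's inequality for `exp` gives
`N / 2|E| ≥ exp 𝔼[log branching] = exp (i * ∑ v, deg v / 2|E| * log (deg v - 1))`,
and convexity of `x ↦ x log (x - 1)` on `[2, ∞)` bounds the exponent below by `i * log (d̄ - 1)`.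
-/

open Finset

section Walks

variable (G : SimpleGraph V)

lemma isNR_cons_iff {k : ℕ} {x : V} {w : Fin (k + 2) → V} :
    IsNR G (k + 2) (Fin.cons x w) ↔ IsNR G (k + 1) w ∧ G.Adj x (w 0) ∧ x ≠ w 1 := by
  constructor
  · rintro ⟨hadj, hnr⟩
    exact ⟨⟨fun j hj => hadj (j + 1) (by omega), fun j hj => hnr (j + 1) (by omega)⟩,
      by exact hadj 0 (by omega), by exact hnr 0 (by omega)⟩
  · rintro ⟨⟨hadj, hnr⟩, hx0, hx1⟩
    refine ⟨fun j hj => ?_, fun j hj => ?_⟩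
    · cases j with
      | zero => exact hx0
      | succ j => exact hadj j (by omega)
    · cases j with
      | zero => exact hx1
      | succ j => exact hnr j (by omega)

lemma IsNR.comp_rev {k : ℕ} {w : Fin (k + 1) → V} (h : IsNR G k w) :
    IsNR G k (w ∘ Fin.rev) := by
  obtain ⟨hadj, hnr⟩ := h
  refine ⟨fun j hj => ?_, fun j hj => ?_⟩
  · convert (hadj (k - 1 - j) (by omega)).symm using 3
    all_goals exact congrArg w (Fin.ext (by simp; omega))
  · convert (hnr (k - 2 - j) (by omega)).symm using 3
    all_goals exact congrArg w (Fin.ext (by simp; omega))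

lemma isNR_one_iff {w : Fin 2 → V} : IsNR G 1 w ↔ G.Adj (w 0) (w 1) :=
  ⟨fun h => h.1 0 one_pos, fun h => ⟨fun j hj => by
    obtain rfl : j = 0 := by omega
    exact h, fun j hj => by omega⟩⟩

lemma IsNR.adj_zero_one {k : ℕ} {w : Fin (k + 2) → V} (h : IsNR G (k + 1) w) :
    G.Adj (w 0) (w 1) :=
  h.1 0 (by omega)

end Walks

section Finsets

variable [Fintype V] (G : SimpleGraph V)

open Classical in
noncomputable def nrWalks (k : ℕ) : Finset (Fin (k + 1) → V) :=
  univ.filter (IsNR G k)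

@[simp]
lemma mem_nrWalks {k : ℕ} {w : Fin (k + 1) → V} : w ∈ nrWalks G k ↔ IsNR G k w := by
  simp [nrWalks]

lemma sum_nrWalks_comp_rev {M : Type*} [AddCommMonoid M] {k : ℕ} (g : (Fin (k + 1) → V) → M) :
    ∑ w ∈ nrWalks G k, g (w ∘ Fin.rev) = ∑ w ∈ nrWalks G k, g w :=
  sum_nbij' (· ∘ Fin.rev) (· ∘ Fin.rev)
    (fun w hw => by simpa using (mem_nrWalks G).1 hw |>.comp_rev)
    (fun w hw => by simpa using (mem_nrWalks G).1 hw |>.comp_rev)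
    (fun w _ => by ext; simp) (fun w _ => by ext; simp) (fun _ _ => rfl)

variable [DecidableRel G.Adj]

lemma sum_nrWalks_one {M : Type*} [AddCommMonoid M] (f : V → V → M) :
    ∑ w ∈ nrWalks G 1, f (w 0) (w 1) = ∑ u, ∑ v ∈ G.neighborFinset u, f u v := by
  rw [nrWalks, sum_filter, ← (finTwoArrowEquiv V).symm.sum_comp, Fintype.sum_prod_type]
  refine sum_congr rfl fun u _ => ?_
  rw [G.neighborFinset_eq_filter, sum_filter]
  simp [isNR_one_iff]

variable [DecidableEq V]

lemma card_filter_tail_eq {k : ℕ} {w : Fin (k + 2) → V} (hw : IsNR G (k + 1) w) :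
    #{w' ∈ nrWalks G (k + 2) | Fin.tail w' = w} = G.degree (w 0) - 1 := by
  rw [← G.card_neighborFinset_eq_degree,
    ← card_erase_of_mem ((G.mem_neighborFinset _ _).2 hw.adj_zero_one)]
  refine card_nbij' (· 0) (fun x => Fin.cons x w) ?_ ?_ ?_ ?_
  · intro w' hw'
    obtain ⟨hmem, rfl⟩ := mem_filter.1 hw'
    rw [mem_nrWalks, ← Fin.cons_self_tail w', isNR_cons_iff] at hmem
    simp [hmem.2.1.symm, hmem.2.2]
  · intro x hx
    obtain ⟨hx1, hx0⟩ := mem_erase.1 hx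
    simp [isNR_cons_iff, hw, ((G.mem_neighborFinset _ _).1 hx0).symm, hx1]
  · intro w' hw'
    rw [← (mem_filter.1 hw').2]
    exact Fin.cons_self_tail w'
  · intro x _
    simp

lemma sum_nrWalks_tail {M : Type*} [AddCommMonoid M] {k : ℕ} (g : (Fin (k + 2) → V) → M) :
    ∑ w ∈ nrWalks G (k + 2), g (Fin.tail w) =
      ∑ w ∈ nrWalks G (k + 1), (G.degree (w 0) - 1) • g w := by
  rw [← sum_fiberwise_of_maps_to (g := Fin.tail) (t := nrWalks G (k + 1))]
  · refine sum_congr rfl fun w hw => ?_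
    rw [sum_congr rfl fun w' hw' => by rw [(mem_filter.1 hw').2], sum_const,
      card_filter_tail_eq G ((mem_nrWalks G).1 hw)]
  · intro w hw
    rw [mem_nrWalks, ← Fin.cons_self_tail w, isNR_cons_iff] at hw
    exact (mem_nrWalks G).2 hw.1

end Finsets

section Branching

variable [Fintype V] (G : SimpleGraph V) [DecidableRel G.Adj]

noncomputable def branching {k : ℕ} (w : Fin (k + 2) → V) : ℝ :=
  ∏ t : Fin k, ((G.degree (w t.succ.castSucc) : ℝ) - 1)

lemma branching_eq_mul_tail {k : ℕ} (w : Fin (k + 3) → V) :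
    branching G w = ((G.degree (w 1) : ℝ) - 1) * branching G (Fin.tail w) := by
  rw [branching, branching, Fin.prod_univ_succ]
  rfl

lemma branching_comp_rev {k : ℕ} (w : Fin (k + 2) → V) :
    branching G (w ∘ Fin.rev) = branching G w :=
  Fintype.prod_equiv Fin.revPerm _ _ fun t => by
    rw [Function.comp_apply, Fin.revPerm_apply,
      show t.succ.castSucc.rev = t.rev.succ.castSucc from Fin.ext (by simp; omega)]

variable {G}

lemma degree_sub_one_pos (hdeg : ∀ v, 2 ≤ G.degree v) (v : V) : (0 : ℝ) < G.degree v - 1 := by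
  have := hdeg v
  rw [sub_pos, Nat.one_lt_cast]
  omega

lemma branching_pos (hdeg : ∀ v, 2 ≤ G.degree v) {k : ℕ} (w : Fin (k + 2) → V) :
    0 < branching G w :=
  prod_pos fun _ _ => degree_sub_one_pos hdeg _

lemma sum_nrWalks_inv_branching_mul_last (k : ℕ) (F : V → ℝ) :
    ∑ w ∈ nrWalks G (k + 1), (branching G w)⁻¹ * F (w (Fin.last _)) =
      ∑ w ∈ nrWalks G (k + 1), (branching G w)⁻¹ * F (w 0) := by
  rw [← sum_nrWalks_comp_rev G fun w => (branching G w)⁻¹ * F (w 0)]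
  simp [branching_comp_rev]

variable [DecidableEq V]

theorem sum_nrWalks_inv_branching_mul (hdeg : ∀ v, 2 ≤ G.degree v) {k : ℕ} (j : Fin (k + 2))
    (F : V → ℝ) :
    ∑ w ∈ nrWalks G (k + 1), (branching G w)⁻¹ * F (w j) =
      ∑ v, (G.degree v : ℝ) * F v := by
  induction k with
  | zero =>
    have h0 : ∑ w ∈ nrWalks G 1, (branching G w)⁻¹ * F (w 0) =
        ∑ v, (G.degree v : ℝ) * F v := by
      simp only [branching, univ_eq_empty, prod_empty, inv_one, one_mul]
      rw [sum_nrWalks_one G fun u _ => F u]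
      simp
    fin_cases j
    · exact h0
    · exact (sum_nrWalks_inv_branching_mul_last 0 F).trans h0
  | succ k ih =>
    have hsucc (j : Fin (k + 2)) :
        ∑ w ∈ nrWalks G (k + 2), (branching G w)⁻¹ * F (w j.succ) =
          ∑ v, (G.degree v : ℝ) * F v := by
      have hpeel (w : Fin (k + 3) → V) : (branching G w)⁻¹ * F (w j.succ) =
          ((G.degree (Fin.tail w 0) : ℝ) - 1)⁻¹ *
            ((branching G (Fin.tail w))⁻¹ * F (Fin.tail w j)) := by
        rw [branching_eq_mul_tail, mul_inv, mul_assoc]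
        rfl
      rw [sum_congr rfl fun w _ => hpeel w, sum_nrWalks_tail G
        fun w => ((G.degree (w 0) : ℝ) - 1)⁻¹ * ((branching G w)⁻¹ * F (w j)), ← ih j]
      refine sum_congr rfl fun w _ => ?_
      have := hdeg (w 0)
      rw [nsmul_eq_mul, Nat.cast_sub (by omega), Nat.cast_one,
        mul_inv_cancel_left₀ (degree_sub_one_pos hdeg _).ne']
    refine Fin.cases ?_ hsucc j
    rw [← sum_nrWalks_inv_branching_mul_last, ← Fin.succ_last]
    exact hsucc _

lemma sum_inv_branching_mul_log_branching (hdeg : ∀ v, 2 ≤ G.degree v) (i : ℕ) :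
    ∑ w ∈ nrWalks G (i + 1), (branching G w)⁻¹ * Real.log (branching G w) =
      i * ∑ v, (G.degree v : ℝ) * Real.log ((G.degree v : ℝ) - 1) := by
  have hlog (w : Fin (i + 2) → V) : Real.log (branching G w) =
      ∑ t : Fin i, Real.log ((G.degree (w t.succ.castSucc) : ℝ) - 1) :=
    Real.log_prod fun _ _ => (degree_sub_one_pos hdeg _).ne'
  simp_rw [hlog, mul_sum]
  rw [sum_comm, sum_congr rfl fun t _ => sum_nrWalks_inv_branching_mul hdeg t.succ.castSucc
    fun v => Real.log ((G.degree v : ℝ) - 1)]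
  rw [sum_const, card_fin, nsmul_eq_mul, mul_sum]

end Branching

lemma convexOn_mul_log_sub_one : ConvexOn ℝ (Set.Ici 2) fun x : ℝ => x * Real.log (x - 1) := by
  refine convexOn_of_hasDerivWithinAt2_nonneg (convex_Ici 2)
    (f' := fun x => Real.log (x - 1) + x / (x - 1)) (f'' := fun x => (x - 2) / (x - 1) ^ 2)
    ?_ (fun x hx => ?_) (fun x hx => ?_) (fun x hx => ?_)
  · exact continuousOn_id.mul <| (continuousOn_id.sub continuousOn_const).log fun y hy =>
      (by linarith [Set.mem_Ici.1 hy] : (0 : ℝ) < y - 1).ne'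
  all_goals
    simp only [interior_Ici, Set.mem_Ioi] at hx
    have hx1 : x - 1 ≠ 0 := by linarith
  · refine (((hasDerivAt_id' x).mul (((hasDerivAt_id' x).sub_const 1).log hx1)).congr_deriv
      ?_).hasDerivWithinAt
    field_simp
  · refine (((((hasDerivAt_id' x).sub_const 1).log hx1).add ((hasDerivAt_id' x).div
      ((hasDerivAt_id' x).sub_const 1) hx1)).congr_deriv ?_).hasDerivWithinAt
    field_simp
    ring
  · exact div_nonneg (by linarith) (sq_nonneg _)

lemma sum_mul_log_average_sub_one_le {ι : Type*} {s : Finset ι} (hs : s.Nonempty) {x : ι → ℝ}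
    (hx : ∀ i ∈ s, 2 ≤ x i) :
    (∑ i ∈ s, x i) * Real.log ((∑ i ∈ s, x i) / #s - 1) ≤
      ∑ i ∈ s, x i * Real.log (x i - 1) := by
  have hcard : (0 : ℝ) < #s := by exact_mod_cast hs.card_pos
  have h := convexOn_mul_log_sub_one.map_sum_le (t := s) (w := fun _ => (#s : ℝ)⁻¹) (p := x)
    (fun _ _ => by positivity) (by simp [hcard.ne']) hx
  simp only [smul_eq_mul] at h
  rw [← mul_sum, ← mul_sum, inv_mul_eq_div, inv_mul_eq_div] at h
  calc (∑ i ∈ s, x i) * Real.log ((∑ i ∈ s, x i) / #s - 1)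
      = #s * ((∑ i ∈ s, x i) / #s * Real.log ((∑ i ∈ s, x i) / #s - 1)) := by
        field_simp
    _ ≤ #s * ((∑ i ∈ s, x i * Real.log (x i - 1)) / #s) := by gcongr
    _ = ∑ i ∈ s, x i * Real.log (x i - 1) := by field_simp

section Counting

variable [Fintype V] [DecidableEq V] (G : SimpleGraph V)

lemma nE_eq_card_filter (i : ℕ) (u v : V) :
    nE G i u v = #{w ∈ nrWalks G (i + 1) | w 0 = u ∧ w 1 = v} := by
  classical
  rw [nE, Nat.card_eq_fintype_card, Fintype.card_subtype, nrWalks, filter_filter]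

variable [DecidableRel G.Adj]

lemma sum_nE_eq_card_nrWalks (i : ℕ) :
    ∑ u, ∑ v ∈ G.neighborFinset u, nE G i u v = #(nrWalks G (i + 1)) := by
  rw [card_eq_sum_card_fiberwise (f := (· 0)) (t := univ) fun _ _ => mem_coe.2 (mem_univ _)]
  refine sum_congr rfl fun u _ => ?_
  rw [card_eq_sum_card_fiberwise (f := (· 1)) (t := G.neighborFinset u)]
  · simp_rw [filter_filter, nE_eq_card_filter]
  · intro w hw
    obtain ⟨hmem, rfl⟩ := mem_filter.1 hw
    exact (G.mem_neighborFinset _ _).2 ((mem_nrWalks G).1 hmem).adj_zero_one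

end Counting

theorem mul_pow_le_card_nrWalks [Fintype V] [DecidableEq V] [Nonempty V] {G : SimpleGraph V}
    [DecidableRel G.Adj] (hdeg : ∀ v, 2 ≤ G.degree v) (i : ℕ) :
    (∑ v, (G.degree v : ℝ)) * ((∑ v, (G.degree v : ℝ)) / Fintype.card V - 1) ^ i ≤
      #(nrWalks G (i + 1)) := by
  set S := ∑ v, (G.degree v : ℝ)
  have hdeg' (v : V) : (2 : ℝ) ≤ G.degree v := by exact_mod_cast hdeg v
  have hS : 0 < S := sum_pos (fun v _ => by linarith [hdeg' v]) univ_nonempty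
  have havg : 0 < S / Fintype.card V - 1 := by
    rw [sub_pos, one_lt_div (by positivity)]
    calc (Fintype.card V : ℝ) < ∑ _v : V, (2 : ℝ) := by
          simp only [sum_const, card_univ, nsmul_eq_mul]
          linarith [(Nat.cast_pos.2 Fintype.card_pos : (0 : ℝ) < Fintype.card V)]
      _ ≤ S := sum_le_sum fun v _ => hdeg' v
  set p := fun w : Fin (i + 2) → V => S⁻¹ * (branching G w)⁻¹
  have hp : ∑ w ∈ nrWalks G (i + 1), p w = 1 := by
    have := sum_nrWalks_inv_branching_mul hdeg (0 : Fin (i + 2)) fun _ => 1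
    simp only [mul_one] at this
    rw [← mul_sum, this, inv_mul_cancel₀ hS.ne']
  have hexp : Real.exp (∑ w ∈ nrWalks G (i + 1), p w * Real.log (branching G w)) ≤
      #(nrWalks G (i + 1)) * S⁻¹ := by
    have := convexOn_exp.map_sum_le (t := nrWalks G (i + 1)) (w := p)
      (p := fun w => Real.log (branching G w)) (fun w _ => by positivity [branching_pos hdeg w])
      hp (fun _ _ => Set.mem_univ _)
    simpa [p, Real.exp_log (branching_pos hdeg _), mul_assoc,
      inv_mul_cancel₀ (branching_pos hdeg _).ne'] using this
  have hlog : ∑ w ∈ nrWalks G (i + 1), p w * Real.log (branching G w) =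
      i * (S⁻¹ * ∑ v, (G.degree v : ℝ) * Real.log ((G.degree v : ℝ) - 1)) := by
    simp only [p, mul_assoc, ← mul_sum, sum_inv_branching_mul_log_branching hdeg]
    ring
  calc S * (S / Fintype.card V - 1) ^ i
      = S * Real.exp (i * Real.log (S / Fintype.card V - 1)) := by
        rw [Real.exp_nat_mul, Real.exp_log havg]
    _ ≤ S * Real.exp (∑ w ∈ nrWalks G (i + 1), p w * Real.log (branching G w)) := by
        rw [hlog]
        gcongr
        rw [le_inv_mul_iff₀ hS, ← card_univ]
        exact sum_mul_log_average_sub_one_le univ_nonempty fun v _ => hdeg' v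
    _ ≤ S * (#(nrWalks G (i + 1)) * S⁻¹) := by gcongr
    _ = #(nrWalks G (i + 1)) := by field_simp

theorem expected_nonreturning_walks_from_random_edge {V : Type*} [Fintype V]
    (G : SimpleGraph V) [DecidableRel G.Adj] (hmin : 2 ≤ G.minDegree)
    (d : ℝ) (hd : d = 2 * (G.edgeFinset.card : ℝ) / (Fintype.card V : ℝ)) (i : ℕ) :
    (∑ u : V, ∑ v ∈ G.neighborFinset u, (nE G i u v : ℝ)) /
        (2 * (G.edgeFinset.card : ℝ)) ≥ (d - 1) ^ i := by
  classical
  have hdeg (v : V) : 2 ≤ G.degree v := hmin.trans (G.minDegree_le_degree v)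
  have : Nonempty V := by
    by_contra! h
    rw [G.minDegree_of_subsingleton] at hmin
    omega
  have hS : ∑ v, (G.degree v : ℝ) = 2 * #G.edgeFinset := by
    exact_mod_cast G.sum_degrees_eq_twice_card_edges
  have hS_pos : (0 : ℝ) < 2 * #G.edgeFinset := by
    rw [← hS]
    exact sum_pos (fun v _ => by exact_mod_cast (hdeg v).trans_lt' two_pos) univ_nonempty
  have hcount : ∑ u, ∑ v ∈ G.neighborFinset u, (nE G i u v : ℝ) = #(nrWalks G (i + 1)) := by
    exact_mod_cast sum_nE_eq_card_nrWalks G i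
  rw [hcount, ge_iff_le, le_div_iff₀ hS_pos, hd, ← hS, mul_comm]
  exact mul_pow_le_card_nrWalks hdeg i
end

section
/- Let G = (V_L, V_R, E) be a bipartite graph of girth g = 2r, and let e = {u,v} be an edge with u ∈ V_L, v ∈ V_R. Then n_L ≥ ∑_{i=0}^{⌊(r-2)/2⌋} n_{2i+1}(u→v) + ∑_{i=0}^{⌈(r-2)/2⌉} n_{2i}(v→u), where n_j(e⃗) counts non-returning walks of j+1 edges starting with the directed edge e⃗. -/
variable {V : Type*}

/-!
Every walk on the right-hand side ends in `V_L`, by parity. Two non-returning walks with the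
same start and the same end whose lengths add up to less than the girth coincide: each of them
traces a forest and is therefore a path, and two distinct paths with common ends close up a cycle
no longer than their total length. Walks beginning `u → v` are compared after dropping `u`, walks
beginning `v → u` after dropping `v`, and a walk of the first kind with one of the second kind
from which `v` is dropped; the combined length is always below `2 r`, so the endpoint map is
injective.
-/

namespace SimpleGraph.Walk

variable {G : SimpleGraph V} {u v : V}

/-- The edges of `p` span a forest: a cycle among them has at most `p.length` edges. -/
theorem isPath_of_isChain_of_length_lt_egirth {p : G.Walk u v}
    (hp : p.edges.IsChain (· ≠ ·)) (hlen : p.length < G.egirth) : p.IsPath := by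
  let H := G.deleteEdges {e | e ∉ p.edges}
  have hH : H.IsAcyclic := by
    intro a c hc
    have hsub : c.edges ⊆ p.edges := fun e he => by
      have := c.edges_subset_edgeSet he
      simp only [H, edgeSet_deleteEdges] at this
      simpa using this.2
    have hle : c.length ≤ p.length := by
      rw [← length_edges, ← length_edges]
      exact (List.subperm_of_subset hc.edges_nodup hsub).length_le
    have := G.egirth_le_length (hc.mapLe (deleteEdges_le _))
    rw [length_mapLe] at this
    exact absurd (this.trans_lt ((Nat.cast_le.2 hle).trans_lt hlen)) (lt_irrefl _)
  have hq := (hH.isPath_iff_isChain (p.transfer H fun e he => by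
    simpa [H, edgeSet_deleteEdges, he] using p.edges_subset_edgeSet he)).2 (by rwa [edges_transfer])
  rwa [isPath_def, support_transfer, ← isPath_def] at hq

theorem eq_of_isChain_of_length_add_lt_egirth {p q : G.Walk u v}
    (hp : p.edges.IsChain (· ≠ ·)) (hq : q.edges.IsChain (· ≠ ·))
    (hlen : p.length + q.length < G.egirth) : p = q := by
  by_contra hne
  have hp' := isPath_of_isChain_of_length_lt_egirth hp (lt_of_le_of_lt (by simp) hlen)
  have hq' := isPath_of_isChain_of_length_lt_egirth hq (lt_of_le_of_lt (by simp) hlen)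
  obtain ⟨_, -, -, c, hc, hcl⟩ := hp'.exists_isCycle_length_le_add_of_ne hq' hne
  exact (G.egirth_le_length hc).not_gt ((Nat.cast_le.2 hcl).trans_lt (by exact_mod_cast hlen))

theorem isChain_edges_of_getElem_support_ne {p : G.Walk u v}
    (h : ∀ i (hi : i + 2 < p.support.length), p.support[i] ≠ p.support[i + 2]) :
    p.edges.IsChain (· ≠ ·) := by
  rw [edges_eq_zipWith_support, List.isChain_iff_getElem]
  intro i hi
  simp only [List.getElem_zipWith, List.getElem_tail, ne_eq, Sym2.eq_iff]
  have hne := h i (by simp at hi ⊢; omega)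
  rintro (⟨h₁, h₂⟩ | ⟨h₁, -⟩)
  exacts [hne (h₁.trans h₂), hne h₁]

end SimpleGraph.Walk

/-- The alternative `n ≤ 2` covers acyclic graphs, whose `girth` is the junk value `0`. -/
theorem SimpleGraph.natCast_lt_egirth {G : SimpleGraph V} {n : ℕ} (h : n < G.girth ∨ n ≤ 2) :
    (n : ℕ∞) < G.egirth := by
  rcases h with h | h
  · exact (Nat.cast_lt.2 h).trans_le G.egirth.natCast_toNat_le_self
  · exact lt_of_lt_of_le (by exact_mod_cast Nat.lt_succ_of_le h) G.three_le_egirth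

namespace IsNR

variable {G : SimpleGraph V} {n m k : ℕ} {w : Fin (n + 1) → V}

theorem isChain_adj (h : IsNR G n w) : (List.ofFn w).IsChain G.Adj :=
  List.isChain_ofFn.2 fun i hi => h.1 i (by omega)

def toWalk (h : IsNR G n w) : G.Walk (w 0) (w (Fin.last n)) :=
  (SimpleGraph.Walk.ofSupport _ (by simp) h.isChain_adj).copy (by simp)
    (by simp only [List.getLast_ofFn]; rfl)

@[simp] theorem support_toWalk (h : IsNR G n w) : h.toWalk.support = List.ofFn w := by
  simp [toWalk]

@[simp] theorem length_toWalk (h : IsNR G n w) : h.toWalk.length = n := by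
  simp [toWalk]

theorem isChain_edges_toWalk (h : IsNR G n w) : h.toWalk.edges.IsChain (· ≠ ·) :=
  SimpleGraph.Walk.isChain_edges_of_getElem_support_ne fun i hi => by
    simp only [support_toWalk, List.getElem_ofFn]
    exact h.2 i (by simp at hi; omega)

theorem ofFn_eq_of_add_lt_egirth {w₁ : Fin (m + 1) → V} {w₂ : Fin (k + 1) → V}
    (h₁ : IsNR G m w₁) (h₂ : IsNR G k w₂) (h0 : w₁ 0 = w₂ 0)
    (hlast : w₁ (Fin.last m) = w₂ (Fin.last k)) (hlen : ((m + k : ℕ) : ℕ∞) < G.egirth) :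
    List.ofFn w₁ = List.ofFn w₂ := by
  have := SimpleGraph.Walk.eq_of_isChain_of_length_add_lt_egirth h₁.isChain_edges_toWalk
    (q := h₂.toWalk.copy h0.symm hlast.symm) (by simpa using h₂.isChain_edges_toWalk)
    (by simpa using hlen)
  simpa using congrArg SimpleGraph.Walk.support this

theorem tail {w : Fin (n + 2) → V} (h : IsNR G (n + 1) w) : IsNR G n (Fin.tail w) :=
  ⟨fun j hj => h.1 (j + 1) (by omega), fun j hj => h.2 (j + 1) (by omega)⟩

theorem even_iff_mem_iff {s : Set V} (hs : ∀ a b, G.Adj a b → (a ∈ s ↔ b ∉ s))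
    (h : IsNR G n w) :
    Even n ↔ (w 0 ∈ s ↔ w (Fin.last n) ∈ s) := by
  classical
  let c : G.Coloring Bool := SimpleGraph.Coloring.mk (fun x => decide (x ∈ s)) fun hab => by
    simp [hs _ _ hab]
  have := c.even_length_iff_congr h.toWalk
  change Even _ ↔ (decide _ = true ↔ decide _ = true) at this
  simpa only [length_toWalk, decide_eq_true_eq] using this

end IsNR

abbrev NRWalks (G : SimpleGraph V) (i : ℕ) (a b : V) : Type _ :=
  {w : Fin (i + 2) → V // IsNR G (i + 1) w ∧ w 0 = a ∧ w 1 = b}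

theorem nE_eq_card {G : SimpleGraph V} {i : ℕ} {a b : V} :
    nE G i a b = Nat.card (NRWalks G i a b) :=
  rfl

namespace NRWalks

variable {G : SimpleGraph V} {i j : ℕ} {a b : V}

def last (w : NRWalks G i a b) : V := w.1 (Fin.last (i + 1))

theorem ofFn_eq_cons (w : NRWalks G i a b) : List.ofFn w.1 = a :: List.ofFn (Fin.tail w.1) := by
  rw [List.ofFn_succ, w.2.2.1]
  rfl

theorem ofFn_eq_of_last_eq (w₁ : NRWalks G i a b) (w₂ : NRWalks G j a b)
    (hlast : w₁.last = w₂.last) (hlen : ((i + j : ℕ) : ℕ∞) < G.egirth) :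
    List.ofFn w₁.1 = List.ofFn w₂.1 := by
  rw [w₁.ofFn_eq_cons, w₂.ofFn_eq_cons]
  congr 1
  exact w₁.2.1.tail.ofFn_eq_of_add_lt_egirth w₂.2.1.tail
    (by simp [Fin.tail, w₁.2.2.2, w₂.2.2.2])
    (by simpa [Fin.tail, last] using hlast) hlen

theorem last_ne_last_of_swap (w₁ : NRWalks G i a b) (w₂ : NRWalks G j b a)
    (hlen : ((i + 1 + j : ℕ) : ℕ∞) < G.egirth) : w₁.last ≠ w₂.last := by
  -- `w₂` without its first vertex would have to be `w₁`, but its second vertex is not `b`.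
  intro hlast
  have h := w₁.2.1.ofFn_eq_of_add_lt_egirth w₂.2.1.tail
    (by simp [Fin.tail, w₁.2.2.1, w₂.2.2.2])
    (by simpa [Fin.tail, last] using hlast) hlen
  have hj : i + 1 = j := by simpa using congrArg List.length h
  have h1 := congrArg (·[1]?) h
  simp only [List.getElem?_ofFn] at h1
  rw [dif_pos (by omega), dif_pos (by omega), Option.some_inj] at h1
  exact w₂.2.1.2 0 (by omega) (by simpa [Fin.tail, w₁.2.2.2, w₂.2.2.1] using h1)

theorem even_iff_mem_iff {s : Set V} (hs : ∀ a b, G.Adj a b → (a ∈ s ↔ b ∉ s))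
    (w : NRWalks G i a b) : Even (i + 1) ↔ (a ∈ s ↔ w.last ∈ s) := by
  have := w.2.1.even_iff_mem_iff hs
  rwa [w.2.2.1] at this

theorem sigma_eq_of_ofFn_eq {ι : Type*} {d : ι → ℕ} (hd : d.Injective)
    {x y : Σ k, NRWalks G (d k) a b} (h : List.ofFn x.2.1 = List.ofFn y.2.1) : x = y := by
  obtain ⟨k, w₁⟩ := x
  obtain ⟨l, w₂⟩ := y
  obtain rfl : k = l := hd (by simpa using congrArg List.length h)
  obtain rfl := Subtype.ext (List.ofFn_injective h)
  rfl

theorem injective_sum_elim_last {r : ℕ} (hr : 2 * r ≤ G.girth) :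
    Function.Injective (Sum.elim
      (fun w : Σ i : Fin ((r - 2) / 2 + 1), NRWalks G (2 * i + 1) a b => w.2.last)
      (fun w : Σ i : Fin ((r - 1) / 2 + 1), NRWalks G (2 * i) b a => w.2.last)) := by
  have hshort : ∀ n : ℕ, n < 2 * r ∨ n ≤ 2 → (n : ℕ∞) < G.egirth := fun n hn =>
    G.natCast_lt_egirth (by omega)
  rintro (⟨i, w₁⟩ | ⟨i, w₁⟩) (⟨j, w₂⟩ | ⟨j, w₂⟩) h <;>
    simp only [Sum.elim_inl, Sum.elim_inr] at h
  · congr 1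
    exact sigma_eq_of_ofFn_eq (d := fun i : Fin _ => 2 * (i : ℕ) + 1)
      (fun _ _ h => Fin.ext (by simp only at h; omega))
      (w₁.ofFn_eq_of_last_eq w₂ h (hshort _ (by omega)))
  · exact absurd h (w₁.last_ne_last_of_swap w₂ (hshort _ (by omega)))
  · exact absurd h.symm (w₂.last_ne_last_of_swap w₁ (hshort _ (by omega)))
  · congr 1
    exact sigma_eq_of_ofFn_eq (d := fun i : Fin _ => 2 * (i : ℕ))
      (fun _ _ h => Fin.ext (by simp only at h; omega))
      (w₁.ofFn_eq_of_last_eq w₂ h (hshort _ (by omega)))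

end NRWalks

theorem bipartite_walk_count_bound_general {V : Type*} [Fintype V]
    (G : SimpleGraph V) (L R : Finset V)
    (hpart : ∀ v : V, (v ∈ L ∧ v ∉ R) ∨ (v ∈ R ∧ v ∉ L))
    (hbip : ∀ u v : V, G.Adj u v → (u ∈ L ∧ v ∈ R) ∨ (u ∈ R ∧ v ∈ L))
    (r : ℕ) (hg : G.girth = 2 * r) (u v : V) (hu : u ∈ L) (hv : v ∈ R) :
    L.card ≥ ∑ i ∈ Finset.range ((r - 2) / 2 + 1), nE G (2 * i + 1) u v +
      ∑ i ∈ Finset.range ((r - 1) / 2 + 1), nE G (2 * i) v u := by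
  have hL : ∀ a b, G.Adj a b → (a ∈ (L : Set V) ↔ b ∉ (L : Set V)) := fun a b hab => by
    have := hpart a; have := hpart b; have := hbip a b hab
    simp only [Finset.mem_coe]; tauto
  have hvL : v ∉ L := by have := hpart v; tauto
  have hmem : ∀ x, Sum.elim
      (fun w : Σ i : Fin ((r - 2) / 2 + 1), NRWalks G (2 * i + 1) u v => w.2.last)
      (fun w : Σ i : Fin ((r - 1) / 2 + 1), NRWalks G (2 * i) v u => w.2.last) x ∈
        (L : Set V) := by
    rintro (⟨i, w⟩ | ⟨i, w⟩) <;> have := w.even_iff_mem_iff hL <;>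
      simp [parity_simps] at this ⊢ <;> tauto
  calc _ = ∑ i : Fin ((r - 2) / 2 + 1), Nat.card (NRWalks G (2 * i + 1) u v) +
        ∑ i : Fin ((r - 1) / 2 + 1), Nat.card (NRWalks G (2 * i) v u) := by
        simp only [nE_eq_card,
          Fin.sum_univ_eq_sum_range (fun i => Nat.card (NRWalks G (2 * i + 1) u v)),
          Fin.sum_univ_eq_sum_range (fun i => Nat.card (NRWalks G (2 * i) v u))]
    _ = Nat.card ((Σ i : Fin ((r - 2) / 2 + 1), NRWalks G (2 * i + 1) u v) ⊕
        (Σ i : Fin ((r - 1) / 2 + 1), NRWalks G (2 * i) v u)) := by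
        rw [Nat.card_sum, Nat.card_sigma, Nat.card_sigma]
    _ ≤ Nat.card (L : Set V) := Nat.card_le_card_of_injective _
        ((Set.injective_codRestrict hmem).2 (NRWalks.injective_sum_elim_last hg.symm.le))
    _ = L.card := Nat.card_coe_set_eq _ ▸ Set.ncard_coe_finset L

theorem bipartite_walk_count_bound {V : Type*} [Fintype V] [DecidableEq V]
    (G : SimpleGraph V) (L R : Finset V)
    (hpart : ∀ v : V, (v ∈ L ∧ v ∉ R) ∨ (v ∈ R ∧ v ∉ L))
    (hbip : ∀ u v : V, G.Adj u v → (u ∈ L ∧ v ∈ R) ∨ (u ∈ R ∧ v ∈ L))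
    (r : ℕ) (hg : G.girth = 2 * r) (u v : V) (hu : u ∈ L) (hv : v ∈ R)
    (huv : G.Adj u v) :
    L.card ≥ ∑ i ∈ Finset.range ((r - 2) / 2 + 1), nE G (2 * i + 1) u v +
      ∑ i ∈ Finset.range ((r - 1) / 2 + 1), nE G (2 * i) v u :=
  bipartite_walk_count_bound_general G L R hpart hbip r hg u v hu hv
end
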